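/- arXiv:1905.05113 — 2 statements merged into one kernel-verified Lean document; each statement's English description precedes it below -/
import Mathlib

section
/- Under the BC-RED assumptions (g convex and continuously differentiable with block gradients ∇_i g block L_max-Lipschitz, each block denoiser D_i block nonexpansive, τ > 0), each block operator G_i = ∇_i g + τ U_iᵀ(I − D) of G(x) = ∇g(x) + τ(x − D(x)) is block 1/(L_max + 2τ)-cocoercive: for all y ∈ ℝ^n and h ∈ ℝ^{n_i}, ⟨G_i(y + U_i h) − G_i(y), h⟩ ≥ (1/(L_max + 2τ)) ‖G_i(y + U_i h) − G_i(y)‖². -/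
/-! The increment of `G_i` along the block is `a + τ u`, where `a` is the increment of `∇_i g` and
`u = h - (D_i (y + U_i h) - D_i y)`. The function `k ↦ g (y + U_i k)` is convex with
`L_max`-Lipschitz gradient `k ↦ ∇_i g (y + U_i k)`, so Baillon–Haddad gives
`‖a‖² ≤ L_max ⟪a, h⟫`; block nonexpansiveness of `D_i` gives `‖u‖² ≤ 2 ⟪u, h⟫`, i.e.
`‖τ u‖² ≤ 2τ ⟪τ u, h⟫`. Two such bounds with constants `L₁`, `L₂` add up to one with `L₁ + L₂`,
because `(‖a‖ + ‖c‖)² ≤ (L₁ + L₂) (‖a‖²/L₁ + ‖c‖²/L₂)`. -/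

open scoped RealInnerProductSpace BigOperators

noncomputable section

/-- The `i`-th block of `ℝ^n = ℝ^{n 0} × ⋯ × ℝ^{n (b-1)}`. -/
abbrev Blk {b : ℕ} (n : Fin b → ℕ) (i : Fin b) := EuclideanSpace ℝ (Fin (n i))

/-- The full space `ℝ^n` decomposed into `b` blocks. -/
abbrev FullSpace {b : ℕ} (n : Fin b → ℕ) := PiLp 2 fun i => Blk n i

/-- `U_i : ℝ^{n_i} → ℝ^n`, the injection of the `i`-th block (zero elsewhere). -/
noncomputable def blockInj {b : ℕ} (n : Fin b → ℕ) (i : Fin b) (h : Blk n i) :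
    FullSpace n := WithLp.toLp 2 (Pi.single i h)

/-- `U_iᵀ : ℝ^n → ℝ^{n_i}`, extraction of the `i`-th block. -/
def blockExt {b : ℕ} (n : Fin b → ℕ) (i : Fin b) (x : FullSpace n) : Blk n i := x i

/-- `T_i : ℝ^n → ℝ^{n_i}` is block Lipschitz continuous with constant `lam`. -/
def BlockLipschitz {b : ℕ} (n : Fin b → ℕ) (i : Fin b)
    (T : FullSpace n → Blk n i) (lam : ℝ) : Prop :=
  ∀ (y : FullSpace n) (h : Blk n i), ‖T (y + blockInj n i h) - T y‖ ≤ lam * ‖h‖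

/-- `T_i : ℝ^n → ℝ^{n_i}` is block `β`-cocoercive. -/
def BlockCocoercive {b : ℕ} (n : Fin b → ℕ) (i : Fin b)
    (T : FullSpace n → Blk n i) (β : ℝ) : Prop :=
  ∀ (y : FullSpace n) (h : Blk n i),
    β * ‖T (y + blockInj n i h) - T y‖ ^ 2 ≤ ⟪T (y + blockInj n i h) - T y, h⟫

section InnerProductSpace

variable {E F : Type*} [NormedAddCommGroup E] [InnerProductSpace ℝ E]

theorem sq_norm_sub_le_two_mul_inner_of_norm_le {d h : E} (hdh : ‖d‖ ≤ ‖h‖) :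
    ‖h - d‖ ^ 2 ≤ 2 * ⟪h - d, h⟫ := by
  rw [norm_sub_sq_real, inner_sub_left, real_inner_self_eq_norm_sq, real_inner_comm]
  nlinarith [pow_le_pow_left₀ (norm_nonneg d) hdh 2]

theorem norm_add_sq_le_add_mul_inner {a c h : E} {L₁ L₂ : ℝ} (hL₁ : 0 < L₁) (hL₂ : 0 < L₂)
    (ha : ‖a‖ ^ 2 ≤ L₁ * ⟪a, h⟫) (hc : ‖c‖ ^ 2 ≤ L₂ * ⟪c, h⟫) :
    ‖a + c‖ ^ 2 ≤ (L₁ + L₂) * ⟪a + c, h⟫ := by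
  have hweighted : (‖a‖ + ‖c‖) ^ 2 ≤ (L₁ + L₂) * (‖a‖ ^ 2 / L₁ + ‖c‖ ^ 2 / L₂) := by
    rw [div_add_div _ _ hL₁.ne' hL₂.ne', mul_div_assoc', le_div_iff₀ (by positivity)]
    nlinarith [sq_nonneg (L₂ * ‖a‖ - L₁ * ‖c‖)]
  have ha' : ‖a‖ ^ 2 / L₁ ≤ ⟪a, h⟫ := by rwa [div_le_iff₀' hL₁]
  have hc' : ‖c‖ ^ 2 / L₂ ≤ ⟪c, h⟫ := by rwa [div_le_iff₀' hL₂]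
  calc ‖a + c‖ ^ 2 ≤ (‖a‖ + ‖c‖) ^ 2 := by gcongr; exact norm_add_le a c
    _ ≤ (L₁ + L₂) * (‖a‖ ^ 2 / L₁ + ‖c‖ ^ 2 / L₂) := hweighted
    _ ≤ (L₁ + L₂) * ⟪a + c, h⟫ := by rw [inner_add_left]; gcongr

variable [NormedAddCommGroup F] [InnerProductSpace ℝ F]

theorem ConvexOn.comp_const_add_linearMap {f : E → ℝ} (hf : ConvexOn ℝ Set.univ f) (y : E)
    (A : F →ₗ[ℝ] E) : ConvexOn ℝ Set.univ fun k => f (y + A k) := by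
  simpa [Function.comp_def] using (hf.translate_right y).comp_linearMap A

end InnerProductSpace

section Gradient

variable {E : Type*} [NormedAddCommGroup E] [InnerProductSpace ℝ E] [CompleteSpace E]
  {f : E → ℝ} {f' : E → E}

theorem HasGradientAt.hasDerivAt_comp_add_smul {grad x v : E} {t : ℝ}
    (hf : HasGradientAt f grad (x + t • v)) :
    HasDerivAt (fun s : ℝ => f (x + s • v)) ⟪grad, v⟫ t := by
  have hline : HasDerivAt (fun s : ℝ => x + s • v) v t := by
    simpa using ((hasDerivAt_id t).smul_const v).const_add x
  simpa [Function.comp_def, InnerProductSpace.toDual_apply_apply] using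
    hf.hasFDerivAt.comp_hasDerivAt t hline

theorem ConvexOn.add_inner_sub_le_of_hasGradientAt {grad x : E}
    (hconv : ConvexOn ℝ Set.univ f) (hf : HasGradientAt f grad x) (y : E) :
    f x + ⟪grad, y - x⟫ ≤ f y := by
  have hline : ConvexOn ℝ Set.univ fun t : ℝ => f (x + t • (y - x)) :=
    hconv.comp_const_add_linearMap x (LinearMap.toSpanSingleton ℝ E (y - x))
  have hderiv : HasDerivAt (fun t : ℝ => f (x + t • (y - x))) ⟪grad, y - x⟫ 0 :=
    HasGradientAt.hasDerivAt_comp_add_smul (by simpa using hf)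
  have := hline.le_slope_of_hasDerivAt (Set.mem_univ 0) (Set.mem_univ 1) one_pos hderiv
  norm_num [slope_def_field] at this
  linarith

/-- The descent lemma. -/
theorem image_add_le_of_lipschitz_gradient {L : ℝ} (hf : ∀ x, HasGradientAt f (f' x) x)
    (hlip : ∀ a b, ‖f' a - f' b‖ ≤ L * ‖a - b‖) (x v : E) :
    f (x + v) ≤ f x + ⟪f' x, v⟫ + L / 2 * ‖v‖ ^ 2 := by
  set χ : ℝ → ℝ := fun t => f (x + t • v) - t * ⟪f' x, v⟫ - t ^ 2 * (L / 2 * ‖v‖ ^ 2)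
  have hχ : ∀ t, HasDerivAt χ (⟪f' (x + t • v) - f' x, v⟫ - t * (L * ‖v‖ ^ 2)) t := by
    intro t
    refine ((((hf _).hasDerivAt_comp_add_smul).sub (hasDerivAt_mul_const _)).sub
      ((hasDerivAt_pow 2 t).mul_const (L / 2 * ‖v‖ ^ 2))).congr_deriv ?_
    rw [inner_sub_left]; ring
  have hχ_nonpos : ∀ t ∈ interior (Set.Ici (0 : ℝ)), deriv χ t ≤ 0 := by
    intro t ht
    rw [interior_Ici, Set.mem_Ioi] at ht
    rw [(hχ t).deriv, sub_nonpos]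
    calc ⟪f' (x + t • v) - f' x, v⟫ ≤ ‖f' (x + t • v) - f' x‖ * ‖v‖ := real_inner_le_norm _ _
      _ ≤ L * ‖t • v‖ * ‖v‖ := by gcongr; simpa using hlip (x + t • v) x
      _ = t * (L * ‖v‖ ^ 2) := by rw [norm_smul, Real.norm_of_nonneg ht.le]; ring
  have hχ_anti : AntitoneOn χ (Set.Ici 0) :=
    antitoneOn_of_deriv_nonpos (convex_Ici 0)
      (fun t _ => (hχ t).continuousAt.continuousWithinAt)
      (fun t _ => (hχ t).differentiableAt.differentiableWithinAt) hχ_nonpos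
  have := hχ_anti (Set.mem_Ici.2 le_rfl) (Set.mem_Ici.2 zero_le_one) zero_le_one
  norm_num [χ] at this
  linarith

theorem ConvexOn.add_inner_sub_add_sq_norm_le {L : ℝ} (hL : 0 < L)
    (hconv : ConvexOn ℝ Set.univ f) (hf : ∀ x, HasGradientAt f (f' x) x)
    (hlip : ∀ a b, ‖f' a - f' b‖ ≤ L * ‖a - b‖) (a b : E) :
    f b + ⟪f' b, a - b⟫ + 1 / (2 * L) * ‖f' a - f' b‖ ^ 2 ≤ f a := by
  set w := f' a - f' b
  -- Evaluate the first-order lower bound at `b` and the descent bound at `a` at `a - w / L`.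
  have hlower := hconv.add_inner_sub_le_of_hasGradientAt (hf b) (a + -(1 / L) • w)
  have hupper := image_add_le_of_lipschitz_gradient hf hlip a (-(1 / L) • w)
  have hstep : ⟪f' b, a + -(1 / L) • w - b⟫ = ⟪f' b, a - b⟫ - 1 / L * ⟪f' b, w⟫ := by
    rw [add_sub_right_comm, inner_add_right, real_inner_smul_right]; ring
  have hinner : ⟪f' a, -(1 / L) • w⟫ = -(1 / L) * ⟪f' a, w⟫ := real_inner_smul_right _ _ _
  have hnorm : L / 2 * ‖-(1 / L) • w‖ ^ 2 = 1 / (2 * L) * ‖w‖ ^ 2 := by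
    rw [norm_smul, norm_neg, Real.norm_of_nonneg (by positivity)]; field_simp
  have hw : 1 / L * ⟪f' a, w⟫ - 1 / L * ⟪f' b, w⟫ = 1 / L * ‖w‖ ^ 2 := by
    rw [← mul_sub, ← inner_sub_left, real_inner_self_eq_norm_sq]
  have : 1 / L * ‖w‖ ^ 2 = 2 * (1 / (2 * L) * ‖w‖ ^ 2) := by field_simp
  linarith

/-- The Baillon–Haddad theorem. -/
theorem ConvexOn.sq_norm_sub_le_mul_inner_of_lipschitz_gradient {L : ℝ} (hL : 0 < L)
    (hconv : ConvexOn ℝ Set.univ f) (hf : ∀ x, HasGradientAt f (f' x) x)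
    (hlip : ∀ a b, ‖f' a - f' b‖ ≤ L * ‖a - b‖) (a b : E) :
    ‖f' a - f' b‖ ^ 2 ≤ L * ⟪f' a - f' b, a - b⟫ := by
  have hab := hconv.add_inner_sub_add_sq_norm_le hL hf hlip a b
  have hba := hconv.add_inner_sub_add_sq_norm_le hL hf hlip b a
  rw [norm_sub_rev] at hba
  have hsum : 1 / L * ‖f' a - f' b‖ ^ 2 ≤ ⟪f' a - f' b, a - b⟫ := by
    have hexp : ⟪f' a - f' b, a - b⟫ = -⟪f' a, b - a⟫ - ⟪f' b, a - b⟫ := by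
      simp only [inner_sub_left, inner_sub_right]; ring
    rw [show 1 / L = 1 / (2 * L) + 1 / (2 * L) by field_simp; ring, add_mul]
    linarith
  rwa [one_div_mul_eq_div, div_le_iff₀' hL] at hsum

end Gradient

theorem PiLp.inner_single_right {ι : Type*} [Fintype ι] [DecidableEq ι] {β : ι → Type*}
    [∀ j, NormedAddCommGroup (β j)] [∀ j, InnerProductSpace ℝ (β j)]
    (x : PiLp 2 β) (i : ι) (a : β i) : ⟪x, PiLp.single 2 i a⟫ = ⟪x i, a⟫ := by
  rw [PiLp.inner_apply, Finset.sum_eq_single i]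
  · rw [PiLp.single_eq_same]
  · intro j _ hj
    rw [PiLp.single_eq_of_ne 2 hj, inner_zero_right]
  · exact fun hi => absurd (Finset.mem_univ i) hi

section Blocks

variable {b : ℕ} {n : Fin b → ℕ} {i : Fin b}

variable (n i) in
def blockInjL : Blk n i →L[ℝ] FullSpace n :=
  (PiLp.continuousLinearEquiv 2 ℝ (Blk n)).symm.toContinuousLinearMap ∘L
    ContinuousLinearMap.single ℝ (Blk n) i

theorem coe_blockInjL : ⇑(blockInjL n i) = blockInj n i := rfl

theorem blockInj_zero : blockInj n i 0 = 0 := by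
  rw [← coe_blockInjL, map_zero]

theorem blockInj_apply_self (h : Blk n i) : blockInj n i h i = h :=
  PiLp.single_eq_same 2 i h

theorem BlockLipschitz.norm_sub_le {T : FullSpace n → Blk n i} {L : ℝ}
    (hT : BlockLipschitz n i T L) (y : FullSpace n) (p q : Blk n i) :
    ‖T (y + blockInj n i p) - T (y + blockInj n i q)‖ ≤ L * ‖p - q‖ := by
  simpa [← coe_blockInjL, add_assoc] using hT (y + blockInj n i q) (p - q)

theorem HasGradientAt.comp_const_add_blockInj {g : FullSpace n → ℝ} {y : FullSpace n}
    {k : Blk n i} {g' : FullSpace n} (hg : HasGradientAt g g' (y + blockInj n i k)) :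
    HasGradientAt (fun k => g (y + blockInj n i k)) (g' i) k := by
  have hcomp := hg.hasFDerivAt.comp k ((blockInjL n i).hasFDerivAt.const_add y)
  have hdual : (InnerProductSpace.toDual ℝ (FullSpace n) g').comp (blockInjL n i) =
      InnerProductSpace.toDual ℝ (Blk n i) (g' i) := by
    ext w
    simp only [ContinuousLinearMap.comp_apply, InnerProductSpace.toDual_apply_apply]
    exact PiLp.inner_single_right g' i w
  rwa [hdual] at hcomp

end Blocks

/-- each block operator `G_i` of `G = ∇g + τ(I - D)` is block
`1/(L_max + 2τ)`-cocoercive. -/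
theorem bcred_block_cocoercive {b : ℕ} (n : Fin b → ℕ)
    (g : FullSpace n → ℝ) (D : FullSpace n → FullSpace n) (τ Lmax : ℝ)
    (hτ : 0 < τ) (hLmax : 0 < Lmax)
    (hg_conv : ConvexOn ℝ Set.univ g) (hg_diff : ContDiff ℝ 1 g)
    (hg_lip : ∀ i, BlockLipschitz n i (fun x => blockExt n i (gradient g x)) Lmax)
    (hD : ∀ i, BlockLipschitz n i (fun x => blockExt n i (D x)) 1)
    (G : FullSpace n → FullSpace n)
    (hG : ∀ x, G x = gradient g x + τ • (x - D x)) (i : Fin b) :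
    BlockCocoercive n i (fun x => blockExt n i (G x)) (1 / (Lmax + 2 * τ)) := by
  intro y h
  set a := blockExt n i (gradient g (y + blockInj n i h)) - blockExt n i (gradient g y)
  set u := h - (blockExt n i (D (y + blockInj n i h)) - blockExt n i (D y))
  have hgrad (k : Blk n i) : HasGradientAt (fun k => g (y + blockInj n i k))
      (gradient g (y + blockInj n i k) i) k :=
    ((hg_diff.differentiable one_ne_zero).differentiableAt.hasGradientAt).comp_const_add_blockInj
  have ha : ‖a‖ ^ 2 ≤ Lmax * ⟪a, h⟫ := by
    have hconv := hg_conv.comp_const_add_linearMap y (blockInjL n i).toLinearMap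
    have := hconv.sq_norm_sub_le_mul_inner_of_lipschitz_gradient hLmax hgrad
      ((hg_lip i).norm_sub_le y) h 0
    rwa [blockInj_zero, add_zero, sub_zero] at this
  have hu : ‖τ • u‖ ^ 2 ≤ 2 * τ * ⟪τ • u, h⟫ := by
    have : ‖u‖ ^ 2 ≤ 2 * ⟪u, h⟫ :=
      sq_norm_sub_le_two_mul_inner_of_norm_le (by simpa only [one_mul] using hD i y h)
    rw [norm_smul, real_inner_smul_left, Real.norm_of_nonneg hτ.le]
    linarith [mul_le_mul_of_nonneg_left this (sq_nonneg τ)]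
  have hsplit : blockExt n i (G (y + blockInj n i h)) - blockExt n i (G y) = a + τ • u := by
    simp only [a, u, hG, blockExt, PiLp.add_apply, PiLp.smul_apply, PiLp.sub_apply,
      blockInj_apply_self]
    module
  rw [hsplit, one_div_mul_eq_div, div_le_iff₀' (by positivity)]
  exact norm_add_sq_le_add_mul_inner hLmax (by positivity) ha hu
end
end

section
/- For a proper, closed, convex h : ℝ^n → ℝ ∪ {+∞} and μ > 0, the Moreau envelope h_μ is convex and continuously differentiable on ℝ^n, its gradient is ∇h_μ(x) = x − prox_{μh}(x) for all x ∈ ℝ^n, and ∇h_μ is 1-Lipschitz. -/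
/-!
Comparing `prox x` with the points of the segment towards an arbitrary `z` gives the optimality
inequality `0 ≤ ⟪prox x - x, z - prox x⟫ + μ (h z - h (prox x))`. Adding it at `x` and `y` shows that
`prox` is firmly nonexpansive, so `x ↦ x - prox x` is `1`-Lipschitz. Using `prox x` as a competitor
at `x + v` gives `h_μ(x + v) ≤ h_μ(x) + ⟪x - prox x, v⟫ + ‖v‖² / 2`; the same bound from `x + v` back
to `x`, together with the Lipschitz estimate, bounds the error from below by `O(‖v‖²)`, so
`x - prox x` is the gradient. Convexity holds because `h_μ` is a partial minimisation of the jointly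
convex function `(x, z) ↦ ½‖z - x‖² + μ h z`.
-/

open scoped RealInnerProductSpace

noncomputable section

open Filter Topology Set Asymptotics InnerProductSpace

theorem nonneg_of_forall_add_mul_nonneg {a c : ℝ} (H : ∀ t, 0 < t → t ≤ 1 → 0 ≤ a + t * c) :
    0 ≤ a := by
  have hlim : Tendsto (fun t : ℝ => a + t * c) (𝓝[>] 0) (𝓝 a) :=
    (Continuous.tendsto' (by fun_prop) 0 a (by simp)).mono_left nhdsWithin_le_nhds
  refine ge_of_tendsto hlim ?_
  filter_upwards [Ioc_mem_nhdsGT one_pos] with t ht using H t ht.1 ht.2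

theorem ConvexOn.comp_isMinOn {𝕜 E F β : Type*} [Field 𝕜] [LinearOrder 𝕜] [IsStrictOrderedRing 𝕜]
    [AddCommGroup E] [Module 𝕜 E] [AddCommGroup F] [Module 𝕜 F]
    [AddCommMonoid β] [PartialOrder β] [IsOrderedAddMonoid β] [SMul 𝕜 β]
    {Φ : E → F → β} (hΦ : ConvexOn 𝕜 univ fun p : E × F => Φ p.1 p.2) {m : E → F}
    (hm : ∀ x z, Φ x (m x) ≤ Φ x z) : ConvexOn 𝕜 univ fun x => Φ x (m x) := by
  refine ⟨convex_univ, fun x _ y _ a b ha hb hab => ?_⟩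
  calc Φ (a • x + b • y) (m (a • x + b • y)) ≤ Φ (a • x + b • y) (a • m x + b • m y) := hm _ _
    _ ≤ a • Φ x (m x) + b • Φ y (m y) :=
      hΦ.2 (mem_univ (x, m x)) (mem_univ (y, m y)) ha hb hab

section
variable {F : Type*} [NormedAddCommGroup F] [InnerProductSpace ℝ F] [CompleteSpace F]

theorem contDiff_one_of_hasGradientAt {f : F → ℝ} {g : F → F}
    (hf : ∀ x, HasGradientAt f (g x) x) (hg : Continuous g) : ContDiff ℝ 1 f :=
  contDiff_one_iff_hasFDerivAt.2
    ⟨fun x => toDual ℝ F (g x), (toDual ℝ F).continuous.comp hg, fun x => (hf x).hasFDerivAt⟩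

theorem hasGradientAt_of_abs_le_sq {f : F → ℝ} {g x : F} {C : ℝ}
    (hf : ∀ v, |f (x + v) - f x - ⟪g, v⟫| ≤ C * ‖v‖ ^ 2) : HasGradientAt f g x := by
  rw [hasGradientAt_iff_isLittleO_nhds_zero]
  refine (isBigO_of_le' (c := C) (g := fun v : F => ‖v‖ ^ 2) _ fun v => ?_).trans_isLittleO
    (isLittleO_norm_pow_id one_lt_two)
  simpa using hf v

theorem hasGradientAt_of_le_add_inner_add_sq {f : F → ℝ} {g : F → F} {K : NNReal} {C : ℝ}
    (hg : LipschitzWith K g) (hf : ∀ x v, f (x + v) ≤ f x + ⟪g x, v⟫ + C * ‖v‖ ^ 2) (x : F) :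
    HasGradientAt f (g x) x := by
  refine hasGradientAt_of_abs_le_sq (C := C + K) fun v => abs_le.2 ⟨?_, ?_⟩
  · have hback := hf (x + v) (-v)
    rw [add_neg_cancel_right, inner_neg_right, norm_neg] at hback
    have hlip : -(K * ‖v‖ ^ 2) ≤ ⟪g (x + v) - g x, v⟫ := by
      calc -(K * ‖v‖ ^ 2) = -(K * ‖x + v - x‖ * ‖v‖) := by rw [add_sub_cancel_left]; ring
        _ ≤ -(‖g (x + v) - g x‖ * ‖v‖) := by gcongr; exact hg.norm_sub_le _ _
        _ ≤ ⟪g (x + v) - g x, v⟫ := neg_le_of_abs_le (abs_real_inner_le_norm _ _)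
    rw [inner_sub_left] at hlip
    linarith
  · have hup := hf x v
    have hK : 0 ≤ (K : ℝ) * ‖v‖ ^ 2 := by positivity
    linarith

end

theorem lipschitzWith_one_sub_of_norm_sub_sq_le_inner {E : Type*} [NormedAddCommGroup E]
    [InnerProductSpace ℝ E] {T : E → E} (hT : ∀ x y, ‖T x - T y‖ ^ 2 ≤ ⟪x - y, T x - T y⟫) :
    LipschitzWith 1 fun x => x - T x := by
  refine LipschitzWith.of_dist_le_mul fun x y => ?_
  rw [dist_eq_norm, dist_eq_norm, NNReal.coe_one, one_mul]
  have hsq : ‖x - T x - (y - T y)‖ ^ 2 ≤ ‖x - y‖ ^ 2 := by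
    rw [show x - T x - (y - T y) = x - y - (T x - T y) by abel, norm_sub_sq_real]
    nlinarith [hT x y]
  exact pow_le_pow_iff_left₀ (norm_nonneg _) (norm_nonneg _) two_ne_zero |>.1 hsq

section Prox
variable {E : Type*} [NormedAddCommGroup E] [InnerProductSpace ℝ E]

def proxObjective (μ : ℝ) (h : E → ℝ) (x z : E) : ℝ := 1 / 2 * ‖z - x‖ ^ 2 + μ * h z

def IsProx (μ : ℝ) (h : E → ℝ) (prox : E → E) : Prop :=
  ∀ x z, proxObjective μ h x (prox x) ≤ proxObjective μ h x z

/-- Evaluated at the chosen minimiser, so this is the Moreau envelope exactly when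
`IsProx μ h prox`. -/
def moreauEnvelope (μ : ℝ) (h : E → ℝ) (prox : E → E) (x : E) : ℝ :=
  proxObjective μ h x (prox x)

variable {μ : ℝ} {h : E → ℝ} {prox : E → E}

theorem convexOn_proxObjective (hμ : 0 ≤ μ) (hconv : ConvexOn ℝ univ h) :
    ConvexOn ℝ univ fun p : E × E => proxObjective μ h p.1 p.2 := by
  have hsq : ConvexOn ℝ univ fun p : E × E => ‖p.2 - p.1‖ ^ 2 :=
    ((convexOn_norm convex_univ).pow (fun _ _ => norm_nonneg _) 2).comp_linearMap
      (LinearMap.snd ℝ E E - LinearMap.fst ℝ E E)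
  exact (hsq.smul (by norm_num : (0 : ℝ) ≤ 1 / 2)).add
    ((hconv.comp_linearMap (LinearMap.snd ℝ E E)).smul hμ)

namespace IsProx

theorem inner_add_mul_sub_nonneg (hp : IsProx μ h prox) (hμ : 0 ≤ μ)
    (hconv : ConvexOn ℝ univ h) (x z : E) :
    0 ≤ ⟪prox x - x, z - prox x⟫ + μ * (h z - h (prox x)) := by
  refine nonneg_of_forall_add_mul_nonneg (c := ‖z - prox x‖ ^ 2 / 2) fun t ht ht1 => ?_
  have hseg : h (prox x + t • (z - prox x)) ≤ (1 - t) * h (prox x) + t * h z := by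
    have := hconv.2 (mem_univ (prox x)) (mem_univ z) (sub_nonneg.2 ht1) ht.le (by ring)
    rwa [show (1 - t) • prox x + t • z = prox x + t • (z - prox x) by module] at this
  have hmin := hp x (prox x + t • (z - prox x))
  rw [proxObjective, proxObjective, show prox x + t • (z - prox x) - x
    = (prox x - x) + t • (z - prox x) by abel, norm_add_sq_real, real_inner_smul_right,
    norm_smul, Real.norm_eq_abs, mul_pow, sq_abs] at hmin
  have : 0 ≤ t * (⟪prox x - x, z - prox x⟫ + μ * (h z - h (prox x))
      + t * (‖z - prox x‖ ^ 2 / 2)) := by nlinarith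
  exact nonneg_of_mul_nonneg_right this ht

theorem norm_sub_sq_le_inner (hp : IsProx μ h prox) (hμ : 0 ≤ μ) (hconv : ConvexOn ℝ univ h)
    (x y : E) : ‖prox x - prox y‖ ^ 2 ≤ ⟪x - y, prox x - prox y⟫ := by
  have hx := hp.inner_add_mul_sub_nonneg hμ hconv x (prox y)
  have hy := hp.inner_add_mul_sub_nonneg hμ hconv y (prox x)
  have hsum : ⟪prox x - x, prox y - prox x⟫ + ⟪prox y - y, prox x - prox y⟫
      = ⟪x - y, prox x - prox y⟫ - ‖prox x - prox y‖ ^ 2 := by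
    simp only [inner_sub_left, inner_sub_right, ← real_inner_self_eq_norm_sq]
    ring
  linarith

theorem lipschitzWith_one_id_sub (hp : IsProx μ h prox) (hμ : 0 ≤ μ)
    (hconv : ConvexOn ℝ univ h) : LipschitzWith 1 fun x => x - prox x :=
  lipschitzWith_one_sub_of_norm_sub_sq_le_inner (hp.norm_sub_sq_le_inner hμ hconv)

theorem moreauEnvelope_add_le (hp : IsProx μ h prox) (x v : E) :
    moreauEnvelope μ h prox (x + v)
      ≤ moreauEnvelope μ h prox x + ⟪x - prox x, v⟫ + 1 / 2 * ‖v‖ ^ 2 := by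
  have hmin : moreauEnvelope μ h prox (x + v) ≤ proxObjective μ h (x + v) (prox x) := hp _ _
  have hexpand : ‖prox x - (x + v)‖ ^ 2 = ‖prox x - x‖ ^ 2 + 2 * ⟪x - prox x, v⟫ + ‖v‖ ^ 2 := by
    rw [show prox x - (x + v) = (prox x - x) - v by abel, norm_sub_sq_real,
      show prox x - x = -(x - prox x) by abel, inner_neg_left, norm_neg]
    ring
  simp only [moreauEnvelope, proxObjective] at hmin ⊢
  linarith

theorem hasGradientAt_moreauEnvelope [CompleteSpace E] (hp : IsProx μ h prox) (hμ : 0 ≤ μ)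
    (hconv : ConvexOn ℝ univ h) (x : E) :
    HasGradientAt (moreauEnvelope μ h prox) (x - prox x) x :=
  hasGradientAt_of_le_add_inner_add_sq (hp.lipschitzWith_one_id_sub hμ hconv)
    hp.moreauEnvelope_add_le x

theorem convexOn_moreauEnvelope (hp : IsProx μ h prox) (hμ : 0 ≤ μ)
    (hconv : ConvexOn ℝ univ h) : ConvexOn ℝ univ (moreauEnvelope μ h prox) :=
  (convexOn_proxObjective hμ hconv).comp_isMinOn hp

end IsProx
end Prox

/-- the Moreau envelope `h_μ` of a (closed, proper) convex `h` is
convex and continuously differentiable with `∇h_μ(x) = x − prox_{μh}(x)`, and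
`∇h_μ` is `1`-Lipschitz. The proximal operator is characterized variationally
as the minimizer of `z ↦ ½‖z − x‖² + μ h(z)`, and `env = h_μ` is its minimum
value. -/
theorem moreau_envelope_differentiable (N : ℕ)
    (h : EuclideanSpace ℝ (Fin N) → ℝ) (μ : ℝ) (hμ : 0 < μ)
    (hconv : ConvexOn ℝ Set.univ h)
    (prox : EuclideanSpace ℝ (Fin N) → EuclideanSpace ℝ (Fin N))
    (hprox : ∀ x z, (1 / 2) * ‖prox x - x‖ ^ 2 + μ * h (prox x)
      ≤ (1 / 2) * ‖z - x‖ ^ 2 + μ * h z)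
    (env : EuclideanSpace ℝ (Fin N) → ℝ)
    (henv : ∀ x, env x = (1 / 2) * ‖prox x - x‖ ^ 2 + μ * h (prox x)) :
    ConvexOn ℝ Set.univ env ∧ ContDiff ℝ 1 env
    ∧ (∀ x, gradient env x = x - prox x)
    ∧ LipschitzWith 1 (fun x => gradient env x) := by
  have hp : IsProx μ h prox := hprox
  obtain rfl : env = moreauEnvelope μ h prox := funext henv
  have hgrad := hp.hasGradientAt_moreauEnvelope hμ.le hconv
  have hlip := hp.lipschitzWith_one_id_sub hμ.le hconv
  have hgradient : ∀ x, gradient (moreauEnvelope μ h prox) x = x - prox x :=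
    fun x => (hgrad x).gradient
  refine ⟨hp.convexOn_moreauEnvelope hμ.le hconv,
    contDiff_one_of_hasGradientAt hgrad hlip.continuous, hgradient, ?_⟩
  simpa only [hgradient] using hlip
end
end
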